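/- Consider the alternating projection iteration in ℝ²: with A = (2, 0), L_{k+1} = P_B((L_k − S_k + A)/2) and S_{k+1} = P_B((S_k − L_k + A)/2), starting from L_0 = (√2, √2) and S_0 = (√2, −√2). Then for every k ≥ 1, the distance of L_k to the solution (1, 0) satisfies ‖L_k − (1, 0)‖ ≥ √2/√(2k+1). -/

import Mathlib

/-!
The iterates stay mirror images of each other under reflection in the first coordinate
axis, `L_k = (a_k, y_k)` and `S_k = (a_k, -y_k)`, so the point projected at every step is `(1, ±y_k)`. It lies outside the
ball and is scaled by `(1 + y_k²)^{-1/2}`, giving `1 / y_{k+1}² = 1 / y_k² + 1`; from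
`y_0² = 2` this yields `y_k² = 2 / (2k + 1)`, and `|y_k|` bounds the distance of `L_k` to `(1, 0)`.
-/

/-- The point `(a, b)` of `ℝ²` (with the Euclidean norm). -/
noncomputable def vec2 (a b : ℝ) : EuclideanSpace ℝ (Fin 2) := WithLp.toLp 2 ![a, b]

/-- Metric projection onto the closed unit ball of `ℝ²`:
`P_B(x) = x` if `‖x‖ ≤ 1` and `P_B(x) = x/‖x‖` otherwise. -/
noncomputable def ballProj (x : EuclideanSpace ℝ (Fin 2)) : EuclideanSpace ℝ (Fin 2) :=
  if ‖x‖ ≤ 1 then x else ‖x‖⁻¹ • x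

lemma vec2_add (a b c d : ℝ) : vec2 a b + vec2 c d = vec2 (a + c) (b + d) := by
  ext i; fin_cases i <;> simp [vec2]

lemma vec2_sub (a b c d : ℝ) : vec2 a b - vec2 c d = vec2 (a - c) (b - d) := by
  ext i; fin_cases i <;> simp [vec2]

lemma smul_vec2 (c a b : ℝ) : c • vec2 a b = vec2 (c * a) (c * b) := by
  ext i; fin_cases i <;> simp [vec2]

lemma norm_vec2 (a b : ℝ) : ‖vec2 a b‖ = √(a ^ 2 + b ^ 2) := by
  simp [EuclideanSpace.norm_eq, Fin.sum_univ_two, vec2, sq_abs]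

lemma abs_le_norm_vec2 (a b : ℝ) : |b| ≤ ‖vec2 a b‖ := by
  rw [norm_vec2, ← Real.sqrt_sq_eq_abs]
  exact Real.sqrt_le_sqrt (by nlinarith [sq_nonneg a])

lemma ballProj_of_one_le_norm {x : EuclideanSpace ℝ (Fin 2)} (h : 1 ≤ ‖x‖) :
    ballProj x = ‖x‖⁻¹ • x := by
  unfold ballProj
  split_ifs with h'
  · rw [le_antisymm h' h, inv_one, one_smul]
  · rfl

lemma ballProj_vec2_one (t : ℝ) :
    ballProj (vec2 1 t) = vec2 (√(1 + t ^ 2))⁻¹ ((√(1 + t ^ 2))⁻¹ * t) := by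
  have h : 1 ≤ ‖vec2 1 t‖ := by
    rw [norm_vec2, one_pow, Real.one_le_sqrt]
    nlinarith [sq_nonneg t]
  rw [ballProj_of_one_le_norm h, norm_vec2, one_pow, smul_vec2, mul_one]

lemma half_smul_vec2_sub_vec2_add (a y z : ℝ) :
    (1 / 2 : ℝ) • (vec2 a y - vec2 a z + vec2 2 0) = vec2 1 ((y - z) / 2) := by
  rw [vec2_sub, vec2_add, smul_vec2]
  congr 1 <;> ring

lemma iterates_eq (L S : ℕ → EuclideanSpace ℝ (Fin 2))
    (hL0 : L 0 = vec2 (Real.sqrt 2) (Real.sqrt 2))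
    (hS0 : S 0 = vec2 (Real.sqrt 2) (-Real.sqrt 2))
    (hLrec : ∀ k : ℕ, L (k + 1) = ballProj ((1 / 2 : ℝ) • (L k - S k + vec2 2 0)))
    (hSrec : ∀ k : ℕ, S (k + 1) = ballProj ((1 / 2 : ℝ) • (S k - L k + vec2 2 0)))
    (k : ℕ) :
    ∃ a y : ℝ, L k = vec2 a y ∧ S k = vec2 a (-y) ∧ y ^ 2 = 2 / (2 * (k : ℝ) + 1) := by
  induction k with
  | zero => exact ⟨√2, √2, hL0, hS0, by norm_num⟩
  | succ k ih =>
    obtain ⟨a, y, hL, hS, hy⟩ := ih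
    set c := (√(1 + y ^ 2))⁻¹
    refine ⟨c, c * y, ?_, ?_, ?_⟩
    · rw [hLrec, hL, hS, half_smul_vec2_sub_vec2_add, sub_neg_eq_add, add_self_div_two,
        ballProj_vec2_one]
    · rw [hSrec, hL, hS, half_smul_vec2_sub_vec2_add, ← neg_add', neg_div, add_self_div_two, ballProj_vec2_one,
        neg_sq, mul_neg]
    · have hc : c ^ 2 = (1 + y ^ 2)⁻¹ := by
        rw [inv_pow, Real.sq_sqrt (by positivity)]
      have hk : (0 : ℝ) < 2 * k + 1 := by positivity
      rw [mul_pow, hc, hy]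
      push_cast
      field_simp
      ring

/-- For the alternating projection iterates for the feasibility problem `‖L‖ ≤ 1`,
`‖S‖ ≤ 1`, `L + S = (2,0)` started from `L₀ = (√2, √2)`, `S₀ = (√2, −√2)`, the distance
of `L_k` to the solution `(1, 0)` satisfies `‖L_k − (1,0)‖ ≥ √2/√(2k+1)` for all `k ≥ 1`. -/
theorem stmt_6 (L S : ℕ → EuclideanSpace ℝ (Fin 2))
    (hL0 : L 0 = vec2 (Real.sqrt 2) (Real.sqrt 2))
    (hS0 : S 0 = vec2 (Real.sqrt 2) (-Real.sqrt 2))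
    (hLrec : ∀ k : ℕ, L (k + 1) = ballProj ((1 / 2 : ℝ) • (L k - S k + vec2 2 0)))
    (hSrec : ∀ k : ℕ, S (k + 1) = ballProj ((1 / 2 : ℝ) • (S k - L k + vec2 2 0))) :
    ∀ k : ℕ, 1 ≤ k →
      Real.sqrt 2 / Real.sqrt (2 * (k : ℝ) + 1) ≤ ‖L k - vec2 1 0‖ := by
  intro k _
  obtain ⟨a, y, hL, -, hy⟩ := iterates_eq L S hL0 hS0 hLrec hSrec k
  calc √2 / √(2 * (k : ℝ) + 1) = |y| := by
        rw [← Real.sqrt_sq_eq_abs, hy, Real.sqrt_div' _ (by positivity)]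
    _ ≤ ‖L k - vec2 1 0‖ := by
        rw [hL, vec2_sub, sub_zero]
        exact abs_le_norm_vec2 _ _
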